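/- arXiv:1510.07068 — 3 statements merged into one kernel-verified Lean document; each statement's English description precedes it below -/
import Mathlib

section
/- Let F be a field and let A, B be 2×2 matrices over F with trace(A) = trace(B) and det(A) = det(B) (equivalently, with the same characteristic polynomial), and suppose the discriminant trace(A)² − 4·det(A) of this common characteristic polynomial is nonzero. Then A and B are conjugate: there exists an invertible 2×2 matrix P over F with B = P · A · P⁻¹. -/
/-!
A scalar matrix has discriminant zero, so `A` is not scalar and therefore has a cyclic vector `v`:
`v` and `A v` are linearly independent. By Cayley–Hamilton, `A (A v) = tr A • A v - det A • v`,
so in the basis `(v, A v)` the matrix `A` becomes the companion matrix of `X² - tr A • X + det A`.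
Thus `A` and `B` are both conjugate to the same companion matrix.
-/

open Matrix

namespace Matrix

variable {R : Type*} [CommRing R]

/-- The companion matrix of `X ^ 2 - t * X + d`. -/
def companionFinTwo (t d : R) : Matrix (Fin 2) (Fin 2) R := !![0, -d; 1, t]

theorem mul_self_fin_two (A : Matrix (Fin 2) (Fin 2) R) :
    A * A = A.trace • A - A.det • 1 := by
  ext i j
  fin_cases i <;> fin_cases j <;>
    simp [mul_apply, trace_fin_two, det_fin_two] <;> ring

theorem semiconjBy_companionFinTwo (A : Matrix (Fin 2) (Fin 2) R) (v : Fin 2 → R) :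
    SemiconjBy (of ![v, A *ᵥ v])ᵀ (companionFinTwo A.trace A.det) A := by
  have hsq : A *ᵥ (A *ᵥ v) = A.trace • (A *ᵥ v) - A.det • v := by
    rw [mulVec_mulVec, mul_self_fin_two, sub_mulVec, smul_mulVec, smul_mulVec, one_mulVec]
  unfold SemiconjBy
  ext i j
  have hsq_i := congrFun hsq i
  fin_cases i <;> fin_cases j <;>
    simp [companionFinTwo, mul_apply, mulVec, dotProduct] at hsq_i ⊢ <;>
    linear_combination -hsq_i

theorem discr_smul_one_fin_two (a : R) : (a • (1 : Matrix (Fin 2) (Fin 2) R)).discr = 0 := by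
  rw [discr_fin_two]
  simp only [trace_smul, trace_one, Fintype.card_fin, Nat.cast_ofNat, smul_eq_mul,
    det_smul_of_tower, det_one, mul_one]
  ring

theorem _root_.IsConj.exists_isUnit_det_eq_mul_mul_inv {n : Type*} [Fintype n] [DecidableEq n]
    {A B : Matrix n n R} (h : IsConj A B) : ∃ P : Matrix n n R, IsUnit P.det ∧ B = P * A * P⁻¹ := by
  obtain ⟨P, hP⟩ := h
  have hdet : IsUnit (P : Matrix n n R).det := (isUnit_iff_isUnit_det _).mp P.isUnit
  refine ⟨P, hdet, ?_⟩
  rw [hP.eq, Matrix.mul_assoc, mul_nonsing_inv _ hdet, Matrix.mul_one]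

variable {K : Type*} [Field K]

theorem exists_linearIndependent_mulVec_of_ne_smul_one {n : Type*} [Fintype n] [DecidableEq n]
    (A : Matrix n n K) (hA : ∀ a : K, A ≠ a • 1) :
    ∃ v : n → K, LinearIndependent K ![v, A *ᵥ v] := by
  by_contra! h
  obtain ⟨a, ha⟩ := (toLin' A).exists_eq_smul_id_of_forall_notLinearIndependent h
  exact hA a (by simpa using congrArg LinearMap.toMatrix' ha)

theorem isConj_companionFinTwo (A : Matrix (Fin 2) (Fin 2) K) (hA : A.discr ≠ 0) :
    IsConj (companionFinTwo A.trace A.det) A := by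
  obtain ⟨v, hv⟩ := A.exists_linearIndependent_mulVec_of_ne_smul_one fun a ha ↦
    hA (ha ▸ discr_smul_one_fin_two a)
  have hP : IsUnit (of ![v, A *ᵥ v])ᵀ := linearIndependent_cols_iff_isUnit.mp hv
  exact ⟨hP.unit, A.semiconjBy_companionFinTwo v⟩

end Matrix

theorem statement1 (F : Type*) [Field F]
    (A B : Matrix (Fin 2) (Fin 2) F)
    (htr : A.trace = B.trace) (hdet : A.det = B.det)
    (hdisc : A.trace ^ 2 - 4 * A.det ≠ 0) :
    ∃ P : Matrix (Fin 2) (Fin 2) F, IsUnit P.det ∧ B = P * A * P⁻¹ := by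
  have hA : A.discr ≠ 0 := by rwa [discr_fin_two]
  have hB : B.discr ≠ 0 := by rwa [discr_fin_two, ← htr, ← hdet]
  have hconjB := isConj_companionFinTwo B hB
  rw [← htr, ← hdet] at hconjB
  exact ((isConj_companionFinTwo A hA).symm.trans hconjB).exists_isUnit_det_eq_mul_mul_inv
end

section
/- Let p be a prime and let A be a 2×2 matrix with entries in ℤ_p such that det(A) ≠ 0 and trace(A) is a unit of ℤ_p. Then there exist 2×2 matrices K₁, K₂ with entries in ℤ_p and unit determinants such that A = K₁ · diag(det A, 1) · K₂. -/
/-! Over a local ring a unit trace `a + d` forces `a` or `d` to be a unit. If `d` is a unit with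
inverse `v`, then
`!![a, b; c, d] = !![1, b v; 0, 1] * diagonal ![a d - b c, 1] * !![v, 0; c, d]`,
and both outer factors have unit determinant. The case of a unit `a` reduces to this one by
conjugating with the swap matrix. -/

namespace Matrix

variable {R : Type*} [CommRing R]

theorem exists_eq_mul_diagonal_det_one_mul_of_isUnit_one_one {A : Matrix (Fin 2) (Fin 2) R}
    (hd : IsUnit (A 1 1)) :
    ∃ K₁ K₂ : Matrix (Fin 2) (Fin 2) R,
      IsUnit K₁.det ∧ IsUnit K₂.det ∧ A = K₁ * diagonal ![A.det, 1] * K₂ := by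
  obtain ⟨v, hv⟩ := hd.exists_right_inv
  refine ⟨!![1, A 0 1 * v; 0, 1], !![v, 0; A 1 0, A 1 1], ?_, ?_, ?_⟩
  · simp [det_fin_two_of]
  · simpa [det_fin_two_of] using (IsUnit.of_mul_eq_one_right _ hv).mul hd
  · rw [diagonal_fin_two, det_fin_two, mul_fin_two, mul_fin_two]
    ext i j
    fin_cases i <;> fin_cases j <;>
      simp only [Fin.zero_eta, Fin.mk_one, of_apply, cons_val', cons_val_zero, cons_val_one,
        cons_val_fin_one, mul_one, mul_zero, one_mul, zero_mul, add_zero, zero_add]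
    · linear_combination (-A 0 0) * hv
    · linear_combination (-A 0 1) * hv

theorem exists_eq_mul_diagonal_det_one_mul_of_isUnit_zero_zero {A : Matrix (Fin 2) (Fin 2) R}
    (ha : IsUnit (A 0 0)) :
    ∃ K₁ K₂ : Matrix (Fin 2) (Fin 2) R,
      IsUnit K₁.det ∧ IsUnit K₂.det ∧ A = K₁ * diagonal ![A.det, 1] * K₂ := by
  set P : Matrix (Fin 2) (Fin 2) R := !![0, 1; 1, 0]
  have hPP : P * P = 1 := by simp [P, one_fin_two]
  have hP : IsUnit P.det := by simp [P, det_fin_two_of]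
  have hB : IsUnit ((P * A * P) 1 1) := by
    simpa [P, mul_apply, Fin.sum_univ_two, vecMul, dotProduct] using ha
  have hdet : (P * A * P).det = A.det := by
    rw [det_mul, det_mul, mul_right_comm, ← det_mul, hPP, det_one, one_mul]
  obtain ⟨K₁, K₂, h₁, h₂, hK⟩ := exists_eq_mul_diagonal_det_one_mul_of_isUnit_one_one hB
  refine ⟨P * K₁, K₂ * P, by simpa using hP.mul h₁, by simpa using h₂.mul hP, ?_⟩
  calc A = P * (P * A * P) * P := by
        rw [mul_assoc P A P, ← mul_assoc P P, hPP, one_mul, mul_assoc, hPP, mul_one]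
    _ = P * K₁ * diagonal ![A.det, 1] * (K₂ * P) := by rw [hK, hdet]; simp only [mul_assoc]

theorem exists_eq_mul_diagonal_det_one_mul_of_isUnit_trace [IsLocalRing R]
    {A : Matrix (Fin 2) (Fin 2) R} (htr : IsUnit A.trace) :
    ∃ K₁ K₂ : Matrix (Fin 2) (Fin 2) R,
      IsUnit K₁.det ∧ IsUnit K₂.det ∧ A = K₁ * diagonal ![A.det, 1] * K₂ := by
  rw [trace_fin_two] at htr
  rcases IsLocalRing.isUnit_or_isUnit_of_isUnit_add htr with ha | hd
  · exact exists_eq_mul_diagonal_det_one_mul_of_isUnit_zero_zero ha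
  · exact exists_eq_mul_diagonal_det_one_mul_of_isUnit_one_one hd

end Matrix

theorem statement9_general (p : ℕ) [Fact p.Prime]
    (A : Matrix (Fin 2) (Fin 2) ℤ_[p]) (htr : IsUnit A.trace) :
    ∃ K₁ K₂ : Matrix (Fin 2) (Fin 2) ℤ_[p],
      IsUnit K₁.det ∧ IsUnit K₂.det ∧
      A = K₁ * Matrix.diagonal ![A.det, 1] * K₂ :=
  Matrix.exists_eq_mul_diagonal_det_one_mul_of_isUnit_trace htr

theorem statement9 (p : ℕ) [Fact p.Prime]
    (A : Matrix (Fin 2) (Fin 2) ℤ_[p]) (hdet : A.det ≠ 0) (htr : IsUnit A.trace) :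
    ∃ K₁ K₂ : Matrix (Fin 2) (Fin 2) ℤ_[p],
      IsUnit K₁.det ∧ IsUnit K₂.det ∧
      A = K₁ * Matrix.diagonal ![A.det, 1] * K₂ :=
  statement9_general p A htr
end

section
/- Let p be a prime, e ≥ 1, q = p^e, and a an integer with p ∤ a. Let n > e and let A be a 2×2 matrix with entries in ℤ_p such that trace(A) ≡ a (mod pⁿ) and det(A) ≡ q (mod pⁿ). Then there exist 2×2 matrices K₁, K₂ with entries in ℤ_p and unit determinants such that A = K₁ · diag(p^e, 1) · K₂; that is, A lies in the Cartan double coset C_{e,0} = GL₂(ℤ_p)·diag(p^e, 1)·GL₂(ℤ_p). -/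
/-!
Modulo pⁿ with n > e the trace of A is congruent to the unit a and the determinant to p^e, so the
trace is a unit and the determinant is p^e times a unit. In a local ring a unit trace forces a unit
diagonal entry, and a matrix with a unit diagonal entry d and determinant π·u (u a unit) factors as
  [[a, b], [c, d]] = [[1, b/d], [0, 1]] · diag(π, 1) · [[u/d, 0], [c, d]],
the case of a unit entry a being the same up to swapping the basis vectors.
-/

open Matrix IsLocalRing

namespace Matrix

variable {R : Type*} [CommRing R]

/-- `GL₂(R) · diag(π, 1) · GL₂(R)`; the paper's `C_{e,0}` is the case `π = p ^ e`. -/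
def cartanDoubleCoset (π : R) : Set (Matrix (Fin 2) (Fin 2) R) :=
  {A | ∃ K₁ K₂ : Matrix (Fin 2) (Fin 2) R,
    IsUnit K₁.det ∧ IsUnit K₂.det ∧ A = K₁ * diagonal ![π, 1] * K₂}

theorem mem_cartanDoubleCoset_of_isUnit_apply_one_one {π : R} {A : Matrix (Fin 2) (Fin 2) R}
    (hdet : Associated π A.det) (hA : IsUnit (A 1 1)) : A ∈ cartanDoubleCoset π := by
  obtain ⟨u, hu⟩ := hdet
  obtain ⟨v, hv⟩ := hA
  have hπu : π * u = A 0 0 * A 1 1 - A 0 1 * A 1 0 := by rw [hu, det_fin_two]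
  refine ⟨!![1, A 0 1 * ↑v⁻¹; 0, 1], !![u * ↑v⁻¹, 0; A 1 0, A 1 1], by simp [det_fin_two_of],
    ?_, ?_⟩
  · rw [det_fin_two_of, ← hv]
    simp
  · have hvv : (v : R) * ↑v⁻¹ = 1 := v.mul_inv
    rw [eta_fin_two A, diagonal_vec2, mul_fin_two, mul_fin_two]
    simp only [← hv] at hπu ⊢
    congr 1
    -- only the entry opposite the unit needs the determinant relation
    simp
    linear_combination (-↑v⁻¹ : R) * hπu - A 0 0 * hvv

theorem mem_cartanDoubleCoset_of_isUnit_apply_zero_zero {π : R} {A : Matrix (Fin 2) (Fin 2) R}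
    (hdet : Associated π A.det) (hA : IsUnit (A 0 0)) : A ∈ cartanDoubleCoset π := by
  obtain ⟨u, hu⟩ := hdet
  obtain ⟨v, hv⟩ := hA
  have hπu : π * u = A 0 0 * A 1 1 - A 0 1 * A 1 0 := by rw [hu, det_fin_two]
  refine ⟨!![0, 1; 1, A 1 0 * ↑v⁻¹], !![0, u * ↑v⁻¹; A 0 0, A 0 1], by simp [det_fin_two_of],
    ?_, ?_⟩
  · rw [det_fin_two_of, ← hv]
    simp
  · have hvv : (v : R) * ↑v⁻¹ = 1 := v.mul_inv
    rw [eta_fin_two A, diagonal_vec2, mul_fin_two, mul_fin_two]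
    simp only [← hv] at hπu ⊢
    congr 1
    simp
    linear_combination (-↑v⁻¹ : R) * hπu - A 1 1 * hvv

theorem mem_cartanDoubleCoset_of_isUnit_trace [IsLocalRing R] {π : R}
    {A : Matrix (Fin 2) (Fin 2) R} (hdet : Associated π A.det) (htr : IsUnit A.trace) :
    A ∈ cartanDoubleCoset π := by
  rw [trace_fin_two] at htr
  exact (isUnit_or_isUnit_of_isUnit_add htr).elim
    (mem_cartanDoubleCoset_of_isUnit_apply_zero_zero hdet)
    (mem_cartanDoubleCoset_of_isUnit_apply_one_one hdet)

end Matrix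

namespace IsLocalRing

variable {R : Type*} [CommRing R] [IsLocalRing R]

theorem isUnit_of_sub_mem_maximalIdeal {x y : R} (hy : IsUnit y) (h : y - x ∈ maximalIdeal R) :
    IsUnit x :=
  (isUnit_or_isUnit_of_isUnit_add (by rwa [add_sub_cancel])).resolve_right
    ((mem_maximalIdeal _).1 h)

theorem associated_pow_of_pow_dvd_sub_pow {π d : R} (hπ : π ∈ maximalIdeal R) {e n : ℕ}
    (hen : e < n) (h : π ^ n ∣ d - π ^ e) : Associated (π ^ e) d := by
  obtain ⟨t, ht⟩ := h
  have hunit : IsUnit (1 + π ^ (n - e) * t) := by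
    refine isUnit_of_sub_mem_maximalIdeal isUnit_one ?_
    rw [sub_add_cancel_left]
    exact neg_mem (Ideal.mul_mem_right _ _ (Ideal.pow_mem_of_mem _ hπ _ (by omega)))
  refine ⟨hunit.unit, ?_⟩
  rw [IsUnit.unit_spec, mul_add, mul_one, ← mul_assoc, ← pow_add, Nat.add_sub_cancel' hen.le,
    ← ht, add_sub_cancel]

end IsLocalRing

namespace PadicInt

variable {p : ℕ} [Fact p.Prime]

theorem pow_dvd_sub_of_toZModPow_eq {n : ℕ} {x y : ℤ_[p]} (h : toZModPow n x = toZModPow n y) :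
    (p : ℤ_[p]) ^ n ∣ x - y := by
  rw [← Ideal.mem_span_singleton, ← ker_toZModPow, RingHom.mem_ker, map_sub, h, sub_self]

theorem isUnit_intCast_of_not_dvd {a : ℤ} (ha : ¬ (p : ℤ) ∣ a) : IsUnit (a : ℤ_[p]) :=
  isUnit_iff.2 <| (norm_le_one _).antisymm <| not_lt.1 <| by rwa [norm_intCast_lt_one_iff]

end PadicInt

theorem statement13_general (p : ℕ) [Fact p.Prime] (e : ℕ) (q : ℕ) (hq : q = p ^ e)
    (a : ℤ) (ha : ¬ (p : ℤ) ∣ a) (n : ℕ) (hn : e < n)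
    (A : Matrix (Fin 2) (Fin 2) ℤ_[p])
    (htr : PadicInt.toZModPow n A.trace = (a : ZMod (p ^ n)))
    (hdet : PadicInt.toZModPow n A.det = (q : ZMod (p ^ n))) :
    ∃ K₁ K₂ : Matrix (Fin 2) (Fin 2) ℤ_[p],
      IsUnit K₁.det ∧ IsUnit K₂.det ∧
      A = K₁ * Matrix.diagonal ![(p : ℤ_[p]) ^ e, 1] * K₂ := by
  have hp : (p : ℤ_[p]) ∈ maximalIdeal ℤ_[p] := PadicInt.p_nonunit
  have htr_dvd : (p : ℤ_[p]) ^ n ∣ a - A.trace :=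
    PadicInt.pow_dvd_sub_of_toZModPow_eq (by rw [map_intCast, htr])
  have hdet_dvd : (p : ℤ_[p]) ^ n ∣ A.det - (p : ℤ_[p]) ^ e :=
    PadicInt.pow_dvd_sub_of_toZModPow_eq (by rw [hdet, hq, map_pow, map_natCast, Nat.cast_pow])
  have htr_unit : IsUnit A.trace :=
    isUnit_of_sub_mem_maximalIdeal (PadicInt.isUnit_intCast_of_not_dvd ha)
      (Ideal.mem_of_dvd _ htr_dvd (Ideal.pow_mem_of_mem _ hp n (by omega)))
  exact mem_cartanDoubleCoset_of_isUnit_trace (associated_pow_of_pow_dvd_sub_pow hp hn hdet_dvd)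
    htr_unit

theorem statement13 (p : ℕ) [Fact p.Prime] (e : ℕ) (he : 1 ≤ e) (q : ℕ) (hq : q = p ^ e)
    (a : ℤ) (ha : ¬ (p : ℤ) ∣ a) (n : ℕ) (hn : e < n)
    (A : Matrix (Fin 2) (Fin 2) ℤ_[p])
    (htr : PadicInt.toZModPow n A.trace = (a : ZMod (p ^ n)))
    (hdet : PadicInt.toZModPow n A.det = (q : ZMod (p ^ n))) :
    ∃ K₁ K₂ : Matrix (Fin 2) (Fin 2) ℤ_[p],
      IsUnit K₁.det ∧ IsUnit K₂.det ∧
      A = K₁ * Matrix.diagonal ![(p : ℤ_[p]) ^ e, 1] * K₂ :=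
  statement13_general p e q hq a ha n hn A htr hdet
end
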